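/- arXiv:1603.03661 — 5 statements merged into one kernel-verified Lean document; each statement's English description precedes it below -/
import Mathlib

section
/- Let X be a non-commutative Corson countably compact space and let Y be a countably closed subset of X. Then Y, with the subspace topology, is a non-commutative Corson countably compact space. -/
open Filter Topology Set

universe u

section Defs

/-- A space is countably compact if every countable open cover has a finite subcover. -/
def CountablyCompact (X : Type u) [TopologicalSpace X] : Prop :=
  ∀ U : ℕ → Set X, (∀ n, IsOpen (U n)) → (⋃ n, U n) = Set.univ →
    ∃ t : Finset ℕ, (⋃ n ∈ t, U n) = Set.univ

variable {X : Type u} [TopologicalSpace X]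

/-- A retractional skeleton on a topological space `X`. -/
structure IsRetractionalSkeleton {Γ : Type u} [PartialOrder Γ] (r : Γ → X → X) : Prop where
  nonempty : Nonempty Γ
  directed : ∀ s t : Γ, ∃ w, s ≤ w ∧ t ≤ w
  continuous : ∀ s, Continuous (r s)
  retraction : ∀ s, r s ∘ r s = r s
  compact_range : ∀ s, IsCompact (Set.range (r s))
  metrizable_range : ∀ s, TopologicalSpace.MetrizableSpace (Set.range (r s))
  comp_eq_of_le : ∀ s t, s ≤ t → r t ∘ r s = r s ∧ r s ∘ r t = r s
  seq_sup : ∀ u : ℕ → Γ, Monotone u →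
    ∃ t, IsLUB (Set.range u) t ∧
      ∀ x, Filter.Tendsto (fun n => r (u n) x) Filter.atTop (nhds (r t x))
  tendsto_id : ∀ x, Filter.Tendsto (fun s => r s x) Filter.atTop (nhds x)

/-- `X` admits a retractional skeleton (non-commutative Valdivia when `X` is compact). -/
def HasRetractionalSkeleton (X : Type u) [TopologicalSpace X] : Prop :=
  ∃ (Γ : Type u) (_ : PartialOrder Γ) (r : Γ → X → X), IsRetractionalSkeleton r

/-- `X` admits a full retractional skeleton. -/
def HasFullRetractionalSkeleton (X : Type u) [TopologicalSpace X] : Prop :=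
  ∃ (Γ : Type u) (_ : PartialOrder Γ) (r : Γ → X → X),
    IsRetractionalSkeleton r ∧ ∀ x : X, ∃ s, x ∈ Set.range (r s)

/-- A non-commutative Corson countably compact space. -/
def IsNCCorson (X : Type u) [TopologicalSpace X] : Prop :=
  CountablyCompact X ∧ HasFullRetractionalSkeleton X

/-- A weakly non-commutative Corson countably compact space: a countably compact
continuous image of a non-commutative Corson countably compact space. -/
def IsWeaklyNCCorson (Y : Type u) [TopologicalSpace Y] : Prop :=
  CountablyCompact Y ∧
  ∃ (X : Type u) (_ : TopologicalSpace X) (_ : T2Space X) (_ : CompletelyRegularSpace X),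
    IsNCCorson X ∧ ∃ f : X → Y, Continuous f ∧ Function.Surjective f

/-- A weakly non-commutative Valdivia compact space: a compact space with a dense
countably compact subspace which is weakly non-commutative Corson. -/
def IsWeaklyNCValdivia (K : Type u) [TopologicalSpace K] : Prop :=
  CompactSpace K ∧ ∃ D : Set K, Dense D ∧ IsWeaklyNCCorson ↥D

end Defs

/-!
The retractions `r s` with `r s '' Y ⊆ Y`, restricted to `Y`, form the required skeleton.
Their indices are closed under suprema of chains, since `r t y = lim r (u n) y` lies in the
closure of a countable subset of `Y`, and they are cofinal: alternately take a countable
`D ⊆ Y` with `r s '' D` dense in `r s '' Y` (the range of `r s` is compact metrizable) and move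
up to an index fixing `D` (the skeleton is full). At the supremum `t` of this chain, each
`r t y` lies in the closure of the union of the `D`'s, which is contained in `Y`. The ranges
`range (r s) ∩ Y` are compact because countably closed sets are sequentially closed.
-/

open Function TopologicalSpace

section CountablyClosed

variable {X : Type u} [TopologicalSpace X]

def IsCountablyClosed (Y : Set X) : Prop :=
  ∀ C ⊆ Y, C.Countable → closure C ⊆ Y

theorem IsCountablyClosed.isSeqClosed {Y : Set X} (hY : IsCountablyClosed Y) : IsSeqClosed Y :=
  fun _x _p hxY hx => hY _ (range_subset_iff.mpr hxY) (countable_range _)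
    (mem_closure_of_tendsto hx (.of_forall mem_range_self))

/-- The witnesses `y t ∉ ⋃ n ∈ t, V n` are indexed by the countable type `Finset ℕ`, so the
closure `K` of their range stays in `Y`, and the `V n` extended by `Kᶜ` cover `X`. -/
theorem IsCountablyClosed.countablyCompact (hX : CountablyCompact X) {Y : Set X}
    (hY : IsCountablyClosed Y) : CountablyCompact Y := by
  intro V hVo hVY
  choose U hUo hUV using fun n => isOpen_induced_iff.mp (hVo n)
  by_contra! hV
  choose y hy using fun t : Finset ℕ => (ne_univ_iff_exists_notMem _).mp (hV t)
  set K := closure (range fun t => (y t : X))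
  have hKY : K ⊆ Y := hY _ (range_subset_iff.mpr fun t => (y t).2) (countable_range _)
  have hcover : (⋃ n, U n ∪ Kᶜ) = univ := by
    refine eq_univ_of_forall fun x => ?_
    by_cases hx : x ∈ K
    · obtain ⟨n, hn⟩ := mem_iUnion.mp (hVY ▸ mem_univ (⟨x, hKY hx⟩ : Y))
      rw [← hUV n] at hn
      exact mem_iUnion.mpr ⟨n, .inl hn⟩
    · exact mem_iUnion.mpr ⟨0, .inr hx⟩
  obtain ⟨t, ht⟩ := hX _ (fun n => (hUo n).union isClosed_closure.isOpen_compl) hcover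
  obtain ⟨n, hnt, hn⟩ := mem_iUnion₂.mp (ht ▸ mem_univ (y t : X))
  have hyK : (y t : X) ∈ K := subset_closure (mem_range_self t)
  exact hy t (mem_iUnion₂.mpr ⟨n, hnt, hUV n ▸ hn.resolve_right (not_not.mpr hyK)⟩)

theorem IsCountablyClosed.isCompact_inter {K Y : Set X} (hK : IsCompact K) [SequentialSpace K]
    (hY : IsCountablyClosed Y) : IsCompact (K ∩ Y) := by
  have : CompactSpace K := isCompact_iff_compactSpace.mp hK
  have hclosed : IsClosed ((↑) ⁻¹' Y : Set K) :=
    (hY.isSeqClosed.preimage continuous_subtype_val.seqContinuous).isClosed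
  simpa [image_preimage_eq_inter_range, inter_comm] using
    hclosed.isCompact.image continuous_subtype_val

end CountablyClosed

theorem Set.SurjOn.exists_countable_subset_image_eq {α β : Type*} {f : α → β} {s : Set α}
    {t : Set β} (h : SurjOn f s t) (ht : t.Countable) :
    ∃ u ⊆ s, u.Countable ∧ f '' u = t := by
  rcases isEmpty_or_nonempty α with _ | _
  · refine ⟨∅, empty_subset _, countable_empty, ?_⟩
    rw [image_empty, eq_comm, ← subset_empty_iff]
    simpa [eq_empty_of_isEmpty s] using h
  · exact ⟨invFunOn f s '' t, h.mapsTo_invFunOn.image_subset, ht.image _,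
      h.image_invFunOn_image⟩

theorem exists_countable_dense_subset_of_subset {X : Type*} [TopologicalSpace X] {Z A : Set X}
    [PseudoMetrizableSpace Z] [SeparableSpace Z] (hAZ : A ⊆ Z) :
    ∃ D ⊆ A, D.Countable ∧ A ⊆ closure D := by
  obtain ⟨D, hDA, hDc, hAD⟩ :=
    (IsSeparable.of_separableSpace ((↑) ⁻¹' A : Set Z)).exists_countable_dense_subset
  refine ⟨(↑) '' D, (image_mono hDA).trans (image_preimage_subset _ _), hDc.image _,
    fun a ha => ?_⟩
  exact image_closure_subset_closure_image continuous_subtype_val ⟨⟨a, hAZ ha⟩, hAD ha, rfl⟩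

namespace IsRetractionalSkeleton

variable {X : Type u} [TopologicalSpace X] {Γ : Type u} [PartialOrder Γ] {r : Γ → X → X}
  {Y : Set X}

theorem apply_apply (hr : IsRetractionalSkeleton r) (s : Γ) (x : X) : r s (r s x) = r s x :=
  congrFun (hr.retraction s) x

theorem apply_apply_of_le (hr : IsRetractionalSkeleton r) {s t : Γ} (h : s ≤ t) (x : X) :
    r t (r s x) = r s x :=
  congrFun (hr.comp_eq_of_le s t h).1 x

theorem apply_apply_of_ge (hr : IsRetractionalSkeleton r) {s t : Γ} (h : s ≤ t) (x : X) :
    r s (r t x) = r s x :=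
  congrFun (hr.comp_eq_of_le s t h).2 x

theorem apply_eq_self_of_mem_range (hr : IsRetractionalSkeleton r) {s : Γ} {x : X}
    (hx : x ∈ range (r s)) : r s x = x := by
  obtain ⟨w, rfl⟩ := hx
  exact hr.apply_apply s w

theorem range_subset_range_of_le (hr : IsRetractionalSkeleton r) {s t : Γ} (h : s ≤ t) :
    range (r s) ⊆ range (r t) := by
  rintro _ ⟨x, rfl⟩
  exact ⟨r s x, hr.apply_apply_of_le h x⟩

theorem bddAbove_of_countable (hr : IsRetractionalSkeleton r) {S : Set Γ} (hS : S.Countable) :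
    BddAbove S := by
  rcases S.eq_empty_or_nonempty with rfl | hne
  · have := hr.nonempty
    exact bddAbove_empty
  obtain ⟨c, rfl⟩ := hS.exists_eq_range hne
  choose sup hsup using hr.directed
  let u : ℕ → Γ := fun n => Nat.rec (c 0) (fun m um => sup um (c (m + 1))) n
  have hcu : ∀ n, c n ≤ u n
    | 0 => le_rfl
    | _ + 1 => (hsup _ _).2
  obtain ⟨t, hlub, -⟩ := hr.seq_sup u (monotone_nat_of_le_succ fun n => (hsup _ _).1)
  exact ⟨t, forall_mem_range.mpr fun n => (hcu n).trans (hlub.1 (mem_range_self n))⟩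

theorem exists_ge_forall_apply_eq_self (hr : IsRetractionalSkeleton r)
    (hfull : ∀ x : X, ∃ s, x ∈ range (r s)) {D : Set X} (hD : D.Countable) (s : Γ) :
    ∃ t, s ≤ t ∧ ∀ x ∈ D, r t x = x := by
  choose σ hσ using hfull
  obtain ⟨t, ht⟩ := hr.bddAbove_of_countable ((hD.image σ).insert s)
  refine ⟨t, ht (mem_insert s _), fun x hx => ?_⟩
  exact hr.apply_eq_self_of_mem_range <|
    hr.range_subset_range_of_le (ht (mem_insert_of_mem _ (mem_image_of_mem σ hx))) (hσ x)

theorem exists_countable_subset_image_dense (hr : IsRetractionalSkeleton r) (s : Γ) (Y : Set X) :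
    ∃ D ⊆ Y, D.Countable ∧ r s '' Y ⊆ closure (r s '' D) := by
  have := hr.metrizable_range s
  have : CompactSpace (range (r s)) := isCompact_iff_compactSpace.mp (hr.compact_range s)
  obtain ⟨E, hEY, hEc, hYE⟩ :=
    exists_countable_dense_subset_of_subset (image_subset_range (r s) Y)
  obtain ⟨D, hDY, hDc, rfl⟩ := (surjOn_image (r s) Y).mono subset_rfl hEY
    |>.exists_countable_subset_image_eq hEc
  exact ⟨D, hDY, hDc, hYE⟩

theorem image_eq_range_inter (hr : IsRetractionalSkeleton r) {s : Γ} (hs : MapsTo (r s) Y Y) :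
    r s '' Y = range (r s) ∩ Y := by
  refine Subset.antisymm (image_subset_iff.mpr fun y hy => ⟨mem_range_self y, hs hy⟩) ?_
  rintro x ⟨hx, hxY⟩
  exact ⟨x, hxY, hr.apply_eq_self_of_mem_range hx⟩

theorem restrict (hr : IsRetractionalSkeleton r) (hY : IsCountablyClosed Y)
    (hcof : ∀ s, ∃ t, s ≤ t ∧ MapsTo (r t) Y Y) :
    IsRetractionalSkeleton fun s : {s : Γ // MapsTo (r s) Y Y} => s.2.restrict (r s) Y Y where
  nonempty :=
    have := hr.nonempty
    let ⟨t, _, ht⟩ := hcof (Classical.arbitrary Γ)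
    ⟨⟨t, ht⟩⟩
  directed s t :=
    let ⟨w, hsw, htw⟩ := hr.directed s t
    let ⟨w', hww', hw'⟩ := hcof w
    ⟨⟨w', hw'⟩, hsw.trans hww', htw.trans hww'⟩
  continuous s := (hr.continuous s).restrict s.2
  retraction s := funext fun y => Subtype.ext (hr.apply_apply s y)
  compact_range s := by
    have := hr.metrizable_range s
    rw [Subtype.isCompact_iff, MapsTo.range_restrict, image_preimage_eq_of_subset
      (Subtype.range_coe.symm ▸ s.2.image_subset), hr.image_eq_range_inter s.2]
    exact hY.isCompact_inter (hr.compact_range s)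
  metrizable_range s := by
    have := hr.metrizable_range s
    have hmem (y : range (s.2.restrict (r s) Y Y)) : (y : X) ∈ range (r s) := by
      obtain ⟨_, x, rfl⟩ := y
      exact mem_range_self (x : X)
    exact ((IsEmbedding.subtypeVal.comp IsEmbedding.subtypeVal).codRestrict _ hmem).metrizableSpace
  comp_eq_of_le s t hst :=
    ⟨funext fun y => Subtype.ext (hr.apply_apply_of_le hst y),
      funext fun y => Subtype.ext (hr.apply_apply_of_ge hst y)⟩
  seq_sup u hu := by
    obtain ⟨t, hlub, ht⟩ := hr.seq_sup (fun n => (u n).1) fun _ _ hmn => hu hmn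
    have htY : MapsTo (r t) Y Y := fun y hy =>
      hY _ (range_subset_iff.mpr fun n => (u n).2 hy) (countable_range _)
        (mem_closure_of_tendsto (ht y) (.of_forall mem_range_self))
    refine ⟨⟨t, htY⟩, ⟨?_, fun b hb => ?_⟩, fun y => tendsto_subtype_rng.mpr (ht y)⟩
    · exact forall_mem_range.mpr fun n => hlub.1 (mem_range_self (f := fun n => (u n).1) n)
    · exact hlub.2 (forall_mem_range.mpr fun n => hb (mem_range_self n))
  tendsto_id y := by
    refine tendsto_subtype_rng.mpr ((hr.tendsto_id y).comp ?_)
    exact tendsto_atTop_atTop_of_monotone (Subtype.mono_coe _) fun s =>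
      let ⟨t, hst, ht⟩ := hcof s
      ⟨⟨t, ht⟩, hst⟩

theorem restrict_full (hr : IsRetractionalSkeleton r) (hfull : ∀ x : X, ∃ s, x ∈ range (r s))
    (hcof : ∀ s, ∃ t, s ≤ t ∧ MapsTo (r t) Y Y) (y : Y) :
    ∃ s : {s : Γ // MapsTo (r s) Y Y}, y ∈ range (s.2.restrict (r s) Y Y) := by
  obtain ⟨s, hs⟩ := hfull y
  obtain ⟨t, hst, ht⟩ := hcof s
  refine ⟨⟨t, ht⟩, y, Subtype.ext ?_⟩
  exact hr.apply_eq_self_of_mem_range (hr.range_subset_range_of_le hst hs)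

section T2

variable [T2Space X]

/-- The closed sets `{k ∈ K | r (u m) k = r (u m) z}` decrease in `m`; a point `k` common to all
of them lies in `range (r t)`, so `k = lim r (u m) k = lim r (u m) z = z`. -/
theorem mem_of_forall_apply_mem_image (hr : IsRetractionalSkeleton r) {u : ℕ → Γ}
    (hu : Monotone u) {t : Γ} (ht : ∀ x, Tendsto (fun n => r (u n) x) atTop (𝓝 (r t x)))
    {K : Set X} (hK : IsClosed K) (hKt : K ⊆ range (r t)) {z : X} (hz : z ∈ range (r t))
    (hzK : ∀ n, r (u n) z ∈ r (u n) '' K) : z ∈ K := by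
  let F : ℕ → Set X := fun m => K ∩ {k | r (u m) k = r (u m) z}
  have hFc (m : ℕ) : IsClosed (F m) := hK.inter (isClosed_eq (hr.continuous _) continuous_const)
  have hFd (m : ℕ) : F (m + 1) ⊆ F m := by
    rintro k ⟨hkK, hk : r (u (m + 1)) k = r (u (m + 1)) z⟩
    refine ⟨hkK, show r (u m) k = r (u m) z from ?_⟩
    rw [← hr.apply_apply_of_ge (hu m.le_succ) k, hk, hr.apply_apply_of_ge (hu m.le_succ)]
  obtain ⟨k, hk⟩ := IsCompact.nonempty_iInter_of_sequence_nonempty_isCompact_isClosed F hFd hzK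
    ((hr.compact_range t).of_isClosed_subset (hFc 0) (inter_subset_left.trans hKt)) hFc
  have hkF := mem_iInter.mp hk
  have hkK : k ∈ K := (hkF 0).1
  have hk_lim := ht k
  have hz_lim := ht z
  rw [hr.apply_eq_self_of_mem_range (hKt hkK)] at hk_lim
  rw [hr.apply_eq_self_of_mem_range hz] at hz_lim
  rwa [← tendsto_nhds_unique hk_lim (hz_lim.congr fun m => (hkF m).2.symm)]

theorem exists_ge_mapsTo (hr : IsRetractionalSkeleton r)
    (hfull : ∀ x : X, ∃ s, x ∈ range (r s)) (hY : IsCountablyClosed Y) (s₀ : Γ) :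
    ∃ t, s₀ ≤ t ∧ MapsTo (r t) Y Y := by
  choose D hDY hDc hYD using fun s => hr.exists_countable_subset_image_dense s Y
  choose next hle hfix using fun s => hr.exists_ge_forall_apply_eq_self hfull (hDc s) s
  let u : ℕ → Γ := fun n => next^[n] s₀
  have hu_succ (n : ℕ) : u (n + 1) = next (u n) := iterate_succ_apply' next n s₀
  have hu : Monotone u := monotone_nat_of_le_succ fun n => hu_succ n ▸ hle (u n)
  obtain ⟨t, hlub, ht⟩ := hr.seq_sup u hu
  have hut (n : ℕ) : u n ≤ t := hlub.1 (mem_range_self n)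
  let K := closure (⋃ n, D (u n))
  have hKY : K ⊆ Y := hY _ (iUnion_subset fun n => hDY _) (countable_iUnion fun n => hDc _)
  have hKt : K ⊆ range (r t) := by
    refine closure_minimal (iUnion_subset fun n x hx => ?_) (hr.compact_range t).isClosed
    have hx' : x ∈ range (r (u (n + 1))) := ⟨x, hu_succ n ▸ hfix (u n) x hx⟩
    exact hr.range_subset_range_of_le (hut _) hx'
  have hK : IsCompact K := (hr.compact_range t).of_isClosed_subset isClosed_closure hKt
  refine ⟨t, hut 0, fun y hy => hKY ?_⟩
  refine hr.mem_of_forall_apply_mem_image hu ht isClosed_closure hKt (mem_range_self y)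
    fun n => ?_
  rw [hr.apply_apply_of_ge (hut n)]
  refine closure_minimal (image_mono ?_) (hK.image (hr.continuous _)).isClosed
    (hYD _ (mem_image_of_mem _ hy))
  exact (subset_iUnion (fun n => D (u n)) n).trans subset_closure

end T2

end IsRetractionalSkeleton

theorem countablyClosed_subspace_of_ncCorson_general
    {X : Type u} [TopologicalSpace X] [T2Space X]
    (hX : IsNCCorson X) (Y : Set X)
    (hY : ∀ C : Set X, C ⊆ Y → C.Countable → closure C ⊆ Y) :
    IsNCCorson ↥Y := by
  obtain ⟨hXcc, Γ, _, r, hr, hfull⟩ := hX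
  replace hY : IsCountablyClosed Y := hY
  have hcof := hr.exists_ge_mapsTo hfull hY
  exact ⟨hY.countablyCompact hXcc, _, _, _, hr.restrict hY hcof, hr.restrict_full hfull hcof⟩

/-- A countably closed subspace of a non-commutative Corson countably
compact space is a non-commutative Corson countably compact space. -/
theorem countablyClosed_subspace_of_ncCorson
    {X : Type u} [TopologicalSpace X] [T2Space X] [CompletelyRegularSpace X]
    (hX : IsNCCorson X) (Y : Set X)
    (hY : ∀ C : Set X, C ⊆ Y → C.Countable → closure C ⊆ Y) :
    IsNCCorson ↥Y :=
  countablyClosed_subspace_of_ncCorson_general hX Y hY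
end

section
/- Let {X_n}_{n∈ω} be a countable family of non-commutative Corson countably compact spaces. Then the product ∏_{n∈ω} X_n, with the product topology, is a non-commutative Corson countably compact space. -/
open Filter Topology Set

universe u

/-
The product skeleton is indexed by `∀ n, Γ n` with the coordinatewise order and acts by
`s ↦ Pi.map (fun n ↦ r n (s n))`; its ranges are the products of the factor ranges, which stay
compact and (the index being countable) metrizable, and every point of the product lies in one of
them. The product is countably compact because any space with a full retractional skeleton is
sequentially compact: a countable set of indices has an upper bound `t`, so a sequence lies in the
compact metrizable set `range (r t)`.
-/

open TopologicalSpace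

universe v

theorem CountablyCompactSpace.countablyCompact {X : Type u} [TopologicalSpace X]
    [CountablyCompactSpace X] : CountablyCompact X := fun U hU hcov => by
  obtain ⟨t, ht⟩ := isCountablyCompact_iff_countable_open_cover.mp
    CountablyCompactSpace.isCountablyCompact_univ U hU hcov.ge
  exact ⟨t, univ_subset_iff.mp ht⟩

theorem metrizableSpace_pi_of_countable {ι : Type v} [Countable ι] {X : ι → Type u}
    [∀ i, TopologicalSpace (X i)] [∀ i, MetrizableSpace (X i)] :
    MetrizableSpace (∀ i, X i) :=
  let := fun i => metrizableSpaceMetric (X i)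
  UniformSpace.metrizableSpace

theorem metrizableSpace_univ_pi {ι : Type v} [Countable ι] {X : ι → Type u}
    [∀ i, TopologicalSpace (X i)] (t : ∀ i, Set (X i)) [∀ i, MetrizableSpace (t i)] :
    MetrizableSpace (pi univ t) :=
  have := metrizableSpace_pi_of_countable (X := fun i => t i)
  (((IsEmbedding.piMap fun _ => IsEmbedding.subtypeVal).of_comp_iff
    (f := Equiv.Set.univPi t)).mp IsEmbedding.subtypeVal).metrizableSpace

namespace IsRetractionalSkeleton

variable {X : Type u} [TopologicalSpace X] {Γ : Type u} [PartialOrder Γ] {r : Γ → X → X}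

theorem range_mono (hr : IsRetractionalSkeleton r) {s t : Γ} (hst : s ≤ t) :
    range (r s) ⊆ range (r t) := by
  rintro _ ⟨y, rfl⟩
  exact ⟨r s y, congrFun (hr.comp_eq_of_le s t hst).1 y⟩

theorem exists_forall_le (hr : IsRetractionalSkeleton r) (s : ℕ → Γ) :
    ∃ t, ∀ k, s k ≤ t := by
  choose w hw_left hw_right using hr.directed
  let u : ℕ → Γ := fun k => Nat.rec (s 0) (fun k uk => w uk (s (k + 1))) k
  have hu : Monotone u := monotone_nat_of_le_succ fun k => hw_left _ _
  have hsu : ∀ k, s k ≤ u k := fun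
    | 0 => le_rfl
    | k + 1 => hw_right _ _
  obtain ⟨t, ht, -⟩ := hr.seq_sup u hu
  exact ⟨t, fun k => (hsu k).trans (ht.1 ⟨k, rfl⟩)⟩

theorem isSeqCompact_range (hr : IsRetractionalSkeleton r) (s : Γ) :
    IsSeqCompact (range (r s)) := by
  have := hr.metrizable_range s
  have := isCompact_iff_compactSpace.mp (hr.compact_range s)
  exact isSeqCompact_iff_seqCompactSpace.mpr inferInstance

end IsRetractionalSkeleton

theorem HasFullRetractionalSkeleton.seqCompactSpace {X : Type u} [TopologicalSpace X]
    (h : HasFullRetractionalSkeleton X) : SeqCompactSpace X := by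
  obtain ⟨Γ, _, r, hr, hfull⟩ := h
  refine ⟨fun x _ => ?_⟩
  choose s hs using fun k => hfull (x k)
  obtain ⟨t, ht⟩ := hr.exists_forall_le s
  obtain ⟨a, -, φ, hφ, hlim⟩ := hr.isSeqCompact_range t fun k => hr.range_mono (ht k) (hs k)
  exact ⟨a, mem_univ a, φ, hφ, hlim⟩

section Pi

variable {ι : Type v} {X : ι → Type u} [∀ i, TopologicalSpace (X i)]
  {Γ : ι → Type u} [∀ i, PartialOrder (Γ i)] {r : ∀ i, Γ i → X i → X i}

theorem IsRetractionalSkeleton.pi [Countable ι] (hr : ∀ i, IsRetractionalSkeleton (r i)) :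
    IsRetractionalSkeleton fun s : ∀ i, Γ i => Pi.map fun i => r i (s i) := by
  have := fun i => (hr i).nonempty
  refine
    { nonempty := inferInstance
      directed := fun s t => ?_
      continuous := fun s => Continuous.piMap fun i => (hr i).continuous (s i)
      retraction := fun s => funext fun x => funext fun i => congrFun ((hr i).retraction _) (x i)
      compact_range := fun s => ?_
      metrizable_range := fun s => ?_
      comp_eq_of_le := fun s t hst => ⟨?_, ?_⟩
      seq_sup := fun u hu => ?_
      tendsto_id := fun x => tendsto_pi_nhds.mpr fun i => ?_ }
  · choose w hsw htw using fun i => (hr i).directed (s i) (t i)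
    exact ⟨w, hsw, htw⟩
  · rw [range_piMap]
    exact isCompact_univ_pi fun i => (hr i).compact_range (s i)
  · have := fun i => (hr i).metrizable_range (s i)
    rw [range_piMap]
    exact metrizableSpace_univ_pi _
  · exact funext fun x => funext fun i => congrFun ((hr i).comp_eq_of_le _ _ (hst i)).1 (x i)
  · exact funext fun x => funext fun i => congrFun ((hr i).comp_eq_of_le _ _ (hst i)).2 (x i)
  · choose t hlub hlim using fun i => (hr i).seq_sup (fun k => u k i) fun _ _ hkl => hu hkl i
    refine ⟨t, isLUB_pi.mpr fun i => ?_, fun x => tendsto_pi_nhds.mpr fun i => hlim i (x i)⟩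
    rw [← range_comp]
    exact hlub i
  · have heval : Tendsto (fun s : ∀ i, Γ i => s i) atTop atTop :=
      (Function.monotone_eval i).tendsto_atTop_atTop fun b =>
        (Function.surjective_eval i b).imp fun _ hs => hs.ge
    exact ((hr i).tendsto_id (x i)).comp heval

theorem HasFullRetractionalSkeleton.pi [Countable ι]
    (h : ∀ i, HasFullRetractionalSkeleton (X i)) :
    HasFullRetractionalSkeleton (∀ i, X i) := by
  choose Γ _ r hr hfull using h
  refine ⟨∀ i, Γ i, inferInstance, _, IsRetractionalSkeleton.pi hr, fun x => ?_⟩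
  choose s y hy using fun i => hfull i (x i)
  exact ⟨s, y, funext hy⟩

end Pi

theorem countable_prod_of_ncCorson_general
    {X : ℕ → Type u} [∀ n, TopologicalSpace (X n)]
    (h : ∀ n, IsNCCorson (X n)) :
    IsNCCorson (∀ n, X n) := by
  have hskel := HasFullRetractionalSkeleton.pi fun n => (h n).2
  have := hskel.seqCompactSpace
  exact ⟨CountablyCompactSpace.countablyCompact, hskel⟩

/-- A countable product of non-commutative Corson countably compact
spaces is a non-commutative Corson countably compact space. -/
theorem countable_prod_of_ncCorson
    {X : ℕ → Type u} [∀ n, TopologicalSpace (X n)] [∀ n, T2Space (X n)]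
    [∀ n, CompletelyRegularSpace (X n)]
    (h : ∀ n, IsNCCorson (X n)) :
    IsNCCorson (∀ n, X n) :=
  countable_prod_of_ncCorson_general h
end

section
/- Let X_1, …, X_n be a finite family of non-commutative Corson countably compact spaces. Then their topological sum (disjoint union with the sum topology, in which each X_k is clopen) is a non-commutative Corson countably compact space. -/
/-!
If `r k : Γ k → X k → X k` are full retractional skeletons, the retractions acting componentwise
on `Σ k, X k`, indexed by the product order `Π k, Γ k`, form a full retractional skeleton: every
axiom is checked coordinatewise, and the range of each retraction is homeomorphic to the finite
sum of the compact metrizable ranges `range (r k (s k))`.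
-/

open Filter Topology Set

universe u

open TopologicalSpace

section Sigma

variable {ι : Type*} {X Y : ι → Type*}

theorem Set.range_sigmaMap_id (f : ∀ k, X k → Y k) :
    range (Sigma.map id f) = range (Sigma.map id fun k => ((↑) : range (f k) → Y k)) := by
  ext ⟨k, y⟩
  simp [Sigma.map]

variable [∀ k, TopologicalSpace (X k)]

theorem CountablyCompact.sigma [Finite ι] (h : ∀ k, CountablyCompact (X k)) :
    CountablyCompact (Σ k, X k) := by
  intro U hU hcov
  choose t ht using fun k => h k (fun m => Sigma.mk k ⁻¹' U m)
    (fun m => (hU m).preimage continuous_sigmaMk) (by rw [← preimage_iUnion, hcov, preimage_univ])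
  have := Fintype.ofFinite ι
  refine ⟨Finset.univ.biUnion t, eq_univ_of_forall fun ⟨k, x⟩ => ?_⟩
  obtain ⟨m, hm, hxm⟩ := mem_iUnion₂.1 ((ht k).symm ▸ mem_univ x :
    x ∈ ⋃ m ∈ t k, Sigma.mk k ⁻¹' U m)
  exact mem_iUnion₂.2 ⟨m, Finset.mem_biUnion.2 ⟨k, Finset.mem_univ k, hm⟩, hxm⟩

instance TopologicalSpace.MetrizableSpace.sigma [∀ k, MetrizableSpace (X k)] :
    MetrizableSpace (Σ k, X k) :=
  letI := fun k => metrizableSpaceMetric (X k)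
  letI : MetricSpace (Σ k, X k) := Metric.Sigma.metricSpace
  inferInstance

end Sigma

section SigmaMap

variable {ι : Type*} {X Y : ι → Type*} [∀ k, TopologicalSpace (Y k)] {f : ∀ k, X k → Y k}

theorem isCompact_range_sigmaMap_id [Finite ι] (hf : ∀ k, IsCompact (range (f k))) :
    IsCompact (range (Sigma.map id f)) := by
  have := fun k => isCompact_iff_compactSpace.1 (hf k)
  rw [range_sigmaMap_id]
  exact isCompact_range (continuous_sigma_map.2 fun k => continuous_subtype_val)

theorem metrizableSpace_range_sigmaMap_id (hf : ∀ k, MetrizableSpace (range (f k))) :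
    MetrizableSpace (range (Sigma.map id f)) := by
  rw [range_sigmaMap_id]
  exact ((isEmbedding_sigmaMap Function.injective_id).2 fun k => IsEmbedding.subtypeVal)
    |>.toHomeomorph.symm.isEmbedding.metrizableSpace

end SigmaMap

theorem tendsto_eval_atTop_atTop {ι : Type*} {Γ : ι → Type*} [∀ k, Preorder (Γ k)]
    [∀ k, Nonempty (Γ k)] (k : ι) : Tendsto (fun s : ∀ k, Γ k => s k) atTop atTop :=
  tendsto_atTop_atTop_of_monotone (fun _ _ h => h k) fun b =>
    ⟨_, ((Function.surjective_eval k) b).choose_spec.ge⟩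

namespace IsRetractionalSkeleton

variable {ι : Type*} {X : ι → Type u} [∀ k, TopologicalSpace (X k)] {Γ : ι → Type u}
  [∀ k, PartialOrder (Γ k)] {r : ∀ k, Γ k → X k → X k}

theorem sigma [Finite ι] (hr : ∀ k, IsRetractionalSkeleton (r k)) :
    IsRetractionalSkeleton fun s : (∀ k, Γ k) => Sigma.map id fun k => r k (s k) := by
  have := fun k => (hr k).nonempty
  refine ⟨inferInstance, fun s t => ?_, fun s => ?_, fun s => ?_, fun s => ?_, fun s => ?_,
    fun s t hst => ?_, fun u hu => ?_, fun ⟨k, x⟩ => ?_⟩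
  · choose w hsw htw using fun k => (hr k).directed (s k) (t k)
    exact ⟨w, hsw, htw⟩
  · exact continuous_sigma_map.2 fun k => (hr k).continuous (s k)
  · funext ⟨k, x⟩
    exact congrArg (Sigma.mk k) (congrFun ((hr k).retraction (s k)) x)
  · exact isCompact_range_sigmaMap_id fun k => (hr k).compact_range (s k)
  · exact metrizableSpace_range_sigmaMap_id fun k => (hr k).metrizable_range (s k)
  · constructor <;> funext ⟨k, x⟩
    · exact congrArg (Sigma.mk k) (congrFun ((hr k).comp_eq_of_le _ _ (hst k)).1 x)
    · exact congrArg (Sigma.mk k) (congrFun ((hr k).comp_eq_of_le _ _ (hst k)).2 x)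
  · choose t ht htend using fun k => (hr k).seq_sup (fun m => u m k) fun _ _ h => hu h k
    refine ⟨t, isLUB_pi.2 fun k => ?_, fun ⟨k, x⟩ =>
      (continuous_sigmaMk.tendsto _).comp (htend k x)⟩
    rw [← range_comp]
    exact ht k
  · exact (continuous_sigmaMk.tendsto x).comp
      (((hr k).tendsto_id x).comp (tendsto_eval_atTop_atTop k))

end IsRetractionalSkeleton

theorem HasFullRetractionalSkeleton.sigma {ι : Type*} [Finite ι] {X : ι → Type u}
    [∀ k, TopologicalSpace (X k)] (h : ∀ k, HasFullRetractionalSkeleton (X k)) :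
    HasFullRetractionalSkeleton (Σ k, X k) := by
  choose Γ _ r hr hfull using h
  have := fun k => (hr k).nonempty
  refine ⟨∀ k, Γ k, inferInstance, _, IsRetractionalSkeleton.sigma hr, fun ⟨k, x⟩ => ?_⟩
  obtain ⟨sk, y, rfl⟩ := hfull k x
  obtain ⟨s, rfl⟩ := Function.surjective_eval k sk
  exact ⟨s, ⟨k, y⟩, rfl⟩

theorem finite_sum_of_ncCorson_general
    {n : ℕ} {X : Fin n → Type u} [∀ k, TopologicalSpace (X k)]
    (h : ∀ k, IsNCCorson (X k)) :
    IsNCCorson (Σ k, X k) :=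
  ⟨.sigma fun k => (h k).1, .sigma fun k => (h k).2⟩

/-- A finite topological sum of non-commutative Corson countably
compact spaces is a non-commutative Corson countably compact space. -/
theorem finite_sum_of_ncCorson
    {n : ℕ} {X : Fin n → Type u} [∀ k, TopologicalSpace (X k)] [∀ k, T2Space (X k)]
    [∀ k, CompletelyRegularSpace (X k)]
    (h : ∀ k, IsNCCorson (X k)) :
    IsNCCorson (Σ k, X k) :=
  finite_sum_of_ncCorson_general h
end

section
/- Let K be a compact (Hausdorff) space having a countable dense subset consisting of G_δ points of K. If there exist a compact space L admitting a retractional skeleton and a continuous surjection from L onto K, then K is metrizable. -/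
open Filter Topology Set

universe u

/-!
Pull a point `x` of `L` along the skeleton: `f (r s x) → f x`. If `f x` is a `G_δ` point,
i.e. `{f x} = ⋂ₙ Uₙ`, then `f (r s x) ∈ Uₙ` for all large `s`, and since every countable subset
of the index set is bounded above, `f (r s x) = f x` for all large `s`. Doing this for the
countably many points of `D` at once gives one `s` with `D ⊆ f '' range (r s)`; this image is
compact, hence closed, hence all of `K`. So `K` is a continuous image of the compact metrizable
space `range (r s)`, and such an image of a second countable space under a perfect map is
again second countable.
-/

theorem exists_monotone_forall_le {Γ : Type*} [Preorder Γ] [IsDirectedOrder Γ] (s : ℕ → Γ) :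
    ∃ v : ℕ → Γ, Monotone v ∧ ∀ n, s n ≤ v n := by
  choose g hg₁ hg₂ using exists_ge_ge (α := Γ)
  refine ⟨fun n => Nat.rec (s 0) (fun n v => g v (s (n + 1))) n,
    monotone_nat_of_le_succ fun n => hg₁ _ _, fun n => ?_⟩
  cases n with
  | zero => exact le_rfl
  | succ n => exact hg₂ _ _

theorem Set.Countable.bddAbove_of_forall_monotone {Γ : Type*} [Preorder Γ] [IsDirectedOrder Γ]
    [Nonempty Γ] (h : ∀ u : ℕ → Γ, Monotone u → BddAbove (range u)) {S : Set Γ}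
    (hS : S.Countable) : BddAbove S := by
  rcases S.eq_empty_or_nonempty with rfl | hne
  · exact bddAbove_empty
  obtain ⟨s, rfl⟩ := hS.exists_eq_range hne
  obtain ⟨v, hv, hsv⟩ := exists_monotone_forall_le s
  obtain ⟨t, ht⟩ := h v hv
  exact ⟨t, forall_mem_range.2 fun n => (hsv n).trans (ht (mem_range_self n))⟩

theorem countableInterFilter_atTop_of_bddAbove {Γ : Type*} [Preorder Γ] [IsDirectedOrder Γ]
    [Nonempty Γ] (h : ∀ S : Set Γ, S.Countable → BddAbove S) :
    CountableInterFilter (atTop : Filter Γ) where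
  countable_sInter_mem S hS hmem := by
    choose a ha using fun s (hs : s ∈ S) => mem_atTop_sets.1 (hmem s hs)
    have := hS.to_subtype
    obtain ⟨t, ht⟩ := h (range fun s : S => a s s.2) (countable_range _)
    exact mem_atTop_sets.2
      ⟨t, fun b htb s hs => ha s hs b ((ht ⟨⟨s, hs⟩, rfl⟩).trans htb)⟩

theorem Filter.Tendsto.eventually_eq_of_isGδ {α K : Type*} [TopologicalSpace K] {l : Filter α}
    [CountableInterFilter l] {g : α → K} {y : K} (hg : Tendsto g l (𝓝 y))
    (hy : IsGδ ({y} : Set K)) : ∀ᶠ a in l, g a = y := by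
  obtain ⟨U, hUo, hU⟩ := isGδ_iff_eq_iInter_nat.1 hy
  have hyU : ∀ n, y ∈ U n := mem_iInter.1 (hU ▸ mem_singleton y)
  have hgU : ∀ n, ∀ᶠ a in l, g a ∈ U n := fun n => hg ((hUo n).mem_nhds (hyU n))
  filter_upwards [eventually_countable_forall.2 hgU] with a ha
  simpa [← hU] using mem_iInter.2 ha

theorem IsProperMap.secondCountableTopology {X Y : Type*} [TopologicalSpace X]
    [TopologicalSpace Y] [SecondCountableTopology X] {f : X → Y} (hf : IsProperMap f)
    (hsurj : Function.Surjective f) : SecondCountableTopology Y := by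
  obtain ⟨b, hbc, -, hb⟩ := TopologicalSpace.exists_countable_basis X
  -- The basic sets are `{y | f ⁻¹' {y} ⊆ U}` for finite unions `U` of basic sets of `X`: they are
  -- open because `f` is closed, and they form a basis because the fibres of `f` are compact.
  let B := (fun t : Set (Set X) => kernImage f (⋃ U ∈ t, U)) '' {t | t.Finite ∧ t ⊆ b}
  refine (TopologicalSpace.isTopologicalBasis_of_isOpen_of_nhds ?_ ?_).secondCountableTopology
    ((countable_ofPred_finite_subset hbc).image _ : B.Countable)
  · rintro _ ⟨t, ⟨-, htb⟩, rfl⟩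
    exact isClosedMap_iff_kernImage.1 hf.isClosedMap
      (isOpen_biUnion fun U hU => hb.isOpen (htb hU))
  · intro y W hyW hW
    have hcover : f ⁻¹' {y} ⊆ ⋃ U ∈ {U ∈ b | U ⊆ f ⁻¹' W}, id U := fun x hx => by
      obtain ⟨U, hUb, hxU, hUW⟩ := hb.exists_subset_of_mem_open
        (show f x ∈ W from (mem_singleton_iff.1 hx).symm ▸ hyW) (hW.preimage hf.continuous)
      exact mem_iUnion₂.2 ⟨U, ⟨hUb, hUW⟩, hxU⟩
    obtain ⟨t, htb, htf, hfib⟩ :=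
      (hf.isCompact_preimage isCompact_singleton).elim_finite_subcover_image
        (fun U hU => hb.isOpen hU.1) hcover
    refine ⟨_, ⟨t, ⟨htf, fun U hU => (htb hU).1⟩, rfl⟩, fun x hx => hfib hx, ?_⟩
    calc kernImage f (⋃ U ∈ t, U) ⊆ kernImage f (f ⁻¹' W) :=
          kernImage_mono (iUnion₂_subset fun U hU => (htb hU).2)
      _ = W := kernImage_preimage_eq_iff.2 (by simp [hsurj.range_eq])

namespace IsRetractionalSkeleton

variable {X : Type u} [TopologicalSpace X] {Γ : Type u} [PartialOrder Γ] {r : Γ → X → X}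

theorem isDirectedOrder (hr : IsRetractionalSkeleton r) : IsDirectedOrder Γ :=
  ⟨hr.directed⟩

theorem countableInterFilter_atTop (hr : IsRetractionalSkeleton r) :
    CountableInterFilter (atTop : Filter Γ) :=
  have := hr.nonempty
  have := hr.isDirectedOrder
  countableInterFilter_atTop_of_bddAbove fun _ hS => hS.bddAbove_of_forall_monotone fun u hu =>
    let ⟨t, ht, _⟩ := hr.seq_sup u hu
    ⟨t, ht.1⟩

theorem exists_image_range_eq_univ {K : Type*} [TopologicalSpace K] [T2Space K]
    (hr : IsRetractionalSkeleton r) {f : X → K} (hf : Continuous f)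
    (hsurj : Function.Surjective f)
    {D : Set K} (hDc : D.Countable) (hDd : Dense D) (hD : ∀ y ∈ D, IsGδ ({y} : Set K)) :
    ∃ t, f '' range (r t) = univ := by
  have := hr.nonempty
  have := hr.isDirectedOrder
  have := hr.countableInterFilter_atTop
  have hmem : ∀ y ∈ D, ∀ᶠ s in atTop, y ∈ f '' range (r s) := fun y hy => by
    obtain ⟨x, rfl⟩ := hsurj y
    exact ((hf.tendsto x).comp (hr.tendsto_id x)).eventually_eq_of_isGδ (hD _ hy) |>.mono
      fun s hs => ⟨r s x, mem_range_self x, hs⟩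
  obtain ⟨t, ht⟩ := ((eventually_countable_ball hDc).2 hmem).exists
  exact ⟨t, ((hr.compact_range t).image hf).isClosed.closure_eq.symm.trans
    (hDd.mono ht).closure_eq⟩

end IsRetractionalSkeleton

/-- A compact space with a countable dense set of G-delta points which is
a continuous image of a compact space with a retractional skeleton is metrizable. -/
theorem metrizable_of_image_of_ncValdivia
    {K : Type u} [TopologicalSpace K] [CompactSpace K] [T2Space K]
    (hD : ∃ D : Set K, D.Countable ∧ Dense D ∧ ∀ x ∈ D, IsGδ ({x} : Set K))
    (h : ∃ (L : Type u) (_ : TopologicalSpace L) (_ : CompactSpace L) (_ : T2Space L),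
      HasRetractionalSkeleton L ∧ ∃ f : L → K, Continuous f ∧ Function.Surjective f) :
    TopologicalSpace.MetrizableSpace K := by
  obtain ⟨D, hDc, hDd, hDg⟩ := hD
  obtain ⟨L, _, _, _, ⟨Γ, _, r, hr⟩, f, hf, hsurj⟩ := h
  obtain ⟨t, ht⟩ := hr.exists_image_range_eq_univ hf hsurj hDc hDd hDg
  have : CompactSpace (range (r t)) := isCompact_iff_compactSpace.1 (hr.compact_range t)
  have := hr.metrizable_range t
  have : SecondCountableTopology K :=
    (hf.comp continuous_subtype_val).isProperMap.secondCountableTopology fun y =>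
      let ⟨x, hx, hxy⟩ := ht.symm ▸ mem_univ y
      ⟨⟨x, hx⟩, hxy⟩
  infer_instance
end

section
/- Let {K_α}_{α∈A} be a family of compact spaces, each admitting a retractional skeleton. Then the one-point compactification of the topological sum ⊕_{α∈A} K_α admits a retractional skeleton (i.e., it is a non-commutative Valdivia compact space). -/
open Filter Topology Set

universe u

/-!
Index the skeleton by the functions `f` that choose, for every summand `K α`, either `⊥` or an
index of the skeleton of `K α`, with only countably many non-`⊥` values. Such an `f` acts on `K α`
as the retraction `r α (f α)`, or collapses `K α` to `∞` when `f α = ⊥`. A map sending each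
summand into itself or to `∞` tends to `∞` off compact sets, since neighbourhoods of `∞` contain
all but finitely many summands. The countable support does two things: suprema of increasing
sequences can be taken summandwise without leaving the index set, and the range of the retraction
lies in the one-point compactification of a countable sum of compact metrizable spaces, which is
second countable and hence metrizable.
-/

open OnePoint TopologicalSpace

instance Sigma.weaklyLocallyCompactSpace {ι : Type*} {X : ι → Type*} [∀ i, TopologicalSpace (X i)]
    [∀ i, WeaklyLocallyCompactSpace (X i)] : WeaklyLocallyCompactSpace (Σ i, X i) where
  exists_compact_mem_nhds := fun ⟨_, x⟩ =>
    let ⟨_, hC, hCx⟩ := exists_compact_mem_nhds x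
    ⟨_, hC.image continuous_sigmaMk, isOpenMap_sigmaMk.image_mem_nhds hCx⟩

instance OnePoint.secondCountableTopology {X : Type*} [TopologicalSpace X]
    [SecondCountableTopology X] [WeaklyLocallyCompactSpace X] [T2Space X] :
    SecondCountableTopology (OnePoint X) := by
  let K := CompactExhaustion.choice X
  refine IsTopologicalBasis.secondCountableTopology (isTopologicalBasis_of_isOpen_of_nhds
    (s := ((↑) '' ·) '' countableBasis X ∪ range fun n => ((↑) '' K n)ᶜ) ?_ ?_)
    (((countable_countableBasis X).image _).union (countable_range _))
  · rintro _ (⟨u, hu, rfl⟩ | ⟨n, rfl⟩)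
    · exact isOpen_image_coe.2 (isOpen_of_mem_countableBasis hu)
    · exact isOpen_compl_image_coe.2 ⟨(K.isCompact n).isClosed, K.isCompact n⟩
  · intro z U hzU hU
    induction z using OnePoint.rec with
    | infty =>
      obtain ⟨n, hn⟩ := K.exists_superset_of_isCompact ((isOpen_iff_of_mem hzU).1 hU).2
      refine ⟨_, Or.inr ⟨n, rfl⟩, infty_notMem_image_coe, fun z hz => ?_⟩
      induction z using OnePoint.rec with
      | infty => exact hzU
      | coe x => exact by_contra fun hx => hz (mem_image_of_mem _ (hn hx))
    | coe x =>
      obtain ⟨v, hv, hxv, hvU⟩ := (isBasis_countableBasis X).exists_subset_of_mem_open hzU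
        (hU.preimage continuous_coe)
      exact ⟨_, Or.inl (mem_image_of_mem _ hv), mem_image_of_mem _ hxv, image_subset_iff.2 hvU⟩

section Sigma

variable {ι : Type*} {X : ι → Type*} [∀ i, TopologicalSpace (X i)] [∀ i, CompactSpace (X i)]

theorem coclosedCompact_sigma_eq_comap_cofinite :
    coclosedCompact (Σ i, X i) = comap Sigma.fst cofinite := by
  refine le_antisymm (fun t ht => ?_) (hasBasis_coclosedCompact.ge_iff.2 fun _ ⟨_, hC⟩ => ?_)
  · obtain ⟨F, hF, hFt⟩ := mem_comap.1 ht
    refine hasBasis_coclosedCompact.mem_iff.2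
      ⟨(Sigma.fst ⁻¹' F)ᶜ, ⟨(isOpen_sigma_fst_preimage F).isClosed_compl, ?_⟩, by rwa [compl_compl]⟩
    rw [← preimage_compl, ← sigma_univ]
    exact isCompact_sigma hF fun _ _ => isCompact_univ
  · obtain ⟨s, t, hs, -, rfl⟩ := hC.sigma_exists_finite_sigma_eq
    exact mem_comap.2 ⟨sᶜ, by rwa [mem_cofinite, compl_compl], fun p hp hmem => hp hmem.1⟩

theorem tendsto_coclosedCompact_nhds_infty_of_preserves_summands
    {g : (Σ i, X i) → OnePoint (Σ i, X i)}
    (hg : ∀ p, g p = ∞ ∨ ∃ y, g p = ↑(⟨p.1, y⟩ : Σ i, X i)) :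
    Tendsto g (coclosedCompact _) (𝓝 ∞) := by
  intro U hU
  rw [nhds_infty_eq, mem_sup, mem_map, mem_pure, coclosedCompact_sigma_eq_comap_cofinite,
    mem_comap] at hU
  obtain ⟨⟨F, hF, hFU⟩, h_infty⟩ := hU
  rw [coclosedCompact_sigma_eq_comap_cofinite]
  refine mem_comap.2 ⟨F, hF, fun p hp => ?_⟩
  rcases hg p with hgp | ⟨y, hgp⟩
  · rwa [mem_preimage, hgp]
  · rw [mem_preimage, hgp]
    exact hFU (show (⟨p.1, y⟩ : Σ i, X i).1 ∈ F from hp)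

end Sigma

theorem OnePoint.metrizableSpace_of_subset_sigma {A : Type*} {K : A → Type*}
    [∀ α, TopologicalSpace (K α)] [∀ α, CompactSpace (K α)] [∀ α, T2Space (K α)]
    {S : Set A} (hS : S.Countable) {M : ∀ α, Set (K α)} (hMc : ∀ α ∈ S, IsCompact (M α))
    (hMm : ∀ α ∈ S, MetrizableSpace (M α)) {Y : Set (OnePoint (Σ α, K α))}
    (hY : Y ⊆ insert ∞ ((↑) '' S.sigma M)) : MetrizableSpace Y := by
  have : Countable S := hS.to_subtype
  have (α : S) : CompactSpace (M α) := isCompact_iff_compactSpace.1 (hMc α α.2)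
  have (α : S) : MetrizableSpace (M α) := hMm α α.2
  have : MetrizableSpace (OnePoint (Σ α : S, M α)) := metrizableSpace_of_t3_secondCountable _
  let g : (Σ α : S, M α) → Σ α, K α := Sigma.map Subtype.val fun _ => Subtype.val
  have hg : Tendsto g (coclosedCompact _) (coclosedCompact _) := by
    rw [coclosedCompact_sigma_eq_comap_cofinite, coclosedCompact_sigma_eq_comap_cofinite,
      tendsto_comap_iff]
    exact Subtype.val_injective.tendsto_cofinite.comp tendsto_comap
  have hj : IsEmbedding (OnePoint.map g) :=
    (Continuous.isClosedEmbedding (continuous_map (continuous_sigma_map.2 fun _ =>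
      continuous_subtype_val) hg) (Option.map_injective (Subtype.val_injective.sigma_map
        fun _ => Subtype.val_injective))).isEmbedding
  have hYj : Y ⊆ range (OnePoint.map g) := by
    intro y hy
    rcases hY hy with rfl | ⟨⟨α, x⟩, ⟨hα, hx⟩, rfl⟩
    · exact ⟨∞, rfl⟩
    · exact ⟨↑(⟨⟨α, hα⟩, ⟨x, hx⟩⟩ : Σ α : S, M α), rfl⟩
  exact (hj.toHomeomorph.symm.isEmbedding.comp (IsEmbedding.inclusion hYj)).metrizableSpace

instance WithBot.isDirectedOrder {Γ : Type*} [Preorder Γ] [IsDirectedOrder Γ] :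
    IsDirectedOrder (WithBot Γ) where
  directed a b := by
    induction a using WithBot.recBotCoe with
    | bot => exact ⟨b, bot_le, le_rfl⟩
    | coe s =>
      induction b using WithBot.recBotCoe with
      | bot => exact ⟨s, le_rfl, bot_le⟩
      | coe t =>
        obtain ⟨w, hsw, htw⟩ := exists_ge_ge s t
        exact ⟨w, WithBot.coe_le_coe.2 hsw, WithBot.coe_le_coe.2 htw⟩

theorem WithBot.tendsto_atTop_of_tendsto_coe {Γ Z : Type*} [Preorder Γ] [IsDirectedOrder Γ]
    [Nonempty Γ] {φ : WithBot Γ → Z} {l : Filter Z} (h : Tendsto (fun s : Γ => φ s) atTop l) :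
    Tendsto φ atTop l := by
  intro U hU
  obtain ⟨s₀, hs₀⟩ := mem_atTop_sets.1 (h hU)
  refine mem_atTop_sets.2 ⟨s₀, fun a ha => ?_⟩
  obtain ⟨s, rfl, hs⟩ := WithBot.coe_le_iff.1 ha
  exact hs₀ s hs

theorem WithBot.exists_isLUB_tendsto {Γ Z : Type*} [PartialOrder Γ] [TopologicalSpace Z]
    {φ : WithBot Γ → Z} (h : ∀ v : ℕ → Γ, Monotone v →
      ∃ t, IsLUB (range v) t ∧ Tendsto (fun n => φ (v n)) atTop (𝓝 (φ t)))
    {v : ℕ → WithBot Γ} (hv : Monotone v) :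
    ∃ t, IsLUB (range v) t ∧ Tendsto (fun n => φ (v n)) atTop (𝓝 (φ t)) := by
  by_cases hbot : ∀ n, v n = ⊥
  · refine ⟨⊥, ⟨?_, fun _ _ => bot_le⟩, ?_⟩
    · rintro _ ⟨n, rfl⟩
      rw [hbot n]
    · simp only [hbot]
      exact tendsto_const_nhds
  obtain ⟨n₀, hn₀⟩ := not_forall.1 hbot
  have hne (k : ℕ) : v (k + n₀) ≠ ⊥ := ne_bot_of_le_ne_bot hn₀ (hv (Nat.le_add_left _ _))
  set w : ℕ → Γ := fun k => (v (k + n₀)).unbot (hne k)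
  have hw (k : ℕ) : v (k + n₀) = w k := (WithBot.coe_unbot _ _).symm
  obtain ⟨t, ⟨hub, hlub⟩, hlim⟩ := h w fun k l hkl => by
    rw [← WithBot.coe_le_coe, ← hw, ← hw]
    exact hv (by omega)
  refine ⟨t, ⟨?_, fun b hb => ?_⟩, ?_⟩
  · rintro _ ⟨n, rfl⟩
    calc v n ≤ v (n + n₀) := hv (by omega)
      _ = w n := hw n
      _ ≤ t := WithBot.coe_le_coe.2 (hub ⟨n, rfl⟩)
  · obtain ⟨b, rfl⟩ := WithBot.ne_bot_iff_exists.1 (ne_bot_of_le_ne_bot hn₀ (hb ⟨n₀, rfl⟩))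
    refine WithBot.coe_le_coe.2 (hlub ?_)
    rintro _ ⟨k, rfl⟩
    exact WithBot.coe_le_coe.1 (hw k ▸ hb ⟨k + n₀, rfl⟩)
  · rw [← tendsto_add_atTop_iff_nat n₀]
    simpa only [hw] using hlim

def CountablySupported {ι : Type*} (β : ι → Type*) [∀ i, Bot (β i)] : Type _ :=
  {f : ∀ i, β i // {i | f i ≠ ⊥}.Countable}

namespace CountablySupported

variable {ι : Type*} {β : ι → Type*}

instance [∀ i, Bot (β i)] : CoeFun (CountablySupported β) fun _ => ∀ i, β i := ⟨Subtype.val⟩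

variable [∀ i, PartialOrder (β i)] [∀ i, OrderBot (β i)]

instance : PartialOrder (CountablySupported β) := Subtype.partialOrder _

instance : OrderBot (CountablySupported β) where
  bot := ⟨⊥, by simp⟩
  bot_le f := fun i => bot_le (a := f i)

instance [∀ i, IsDirectedOrder (β i)] : IsDirectedOrder (CountablySupported β) where
  directed f g := by
    classical
    choose w hfw hgw using fun i => exists_ge_ge (f i) (g i)
    let S := {i | f i ≠ ⊥} ∪ {i | g i ≠ ⊥}
    refine ⟨⟨fun i => if i ∈ S then w i else ⊥, (f.2.union g.2).mono fun i hi => ?_⟩,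
      fun i => ?_, fun i => ?_⟩
    · by_contra hiS
      exact hi (if_neg hiS)
    all_goals
      by_cases hiS : i ∈ S
      · simp only [if_pos hiS, hfw, hgw]
      · simp_all [S]

theorem tendsto_apply_atTop (i : ι) :
    Tendsto (fun f : CountablySupported β => f i) atTop atTop := by
  classical
  refine tendsto_atTop_atTop_of_monotone (fun f g hfg => hfg i) fun b =>
    ⟨⟨Function.update ⊥ i b, (countable_singleton i).mono fun j hj => ?_⟩, ?_⟩
  · by_contra hji
    exact hj (Function.update_of_ne hji _ _)
  · exact (Function.update_self i b _).ge

theorem exists_isLUB_forall {P : ∀ i, (ℕ → β i) → β i → Prop}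
    (h : ∀ i (v : ℕ → β i), Monotone v → ∃ t, IsLUB (range v) t ∧ P i v t)
    {u : ℕ → CountablySupported β} (hu : Monotone u) :
    ∃ t : CountablySupported β, IsLUB (range u) t ∧ ∀ i, P i (fun n => u n i) (t i) := by
  choose t ht hP using fun i => h i (fun n => u n i) fun _ _ hnm => hu hnm i
  have hsupp : {i | t i ≠ ⊥} ⊆ ⋃ n, {i | u n i ≠ ⊥} := fun i hi => by
    by_contra hnot
    simp only [mem_iUnion, mem_ofPred_eq, not_exists, not_not] at hnot
    exact hi (le_bot_iff.1 ((ht i).2 (by rintro _ ⟨n, rfl⟩; exact (hnot n).le)))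
  refine ⟨⟨t, (countable_iUnion fun n => (u n).2).mono hsupp⟩, ⟨?_, fun b hb i => ?_⟩, hP⟩
  · rintro _ ⟨n, rfl⟩ i
    exact (ht i).1 ⟨n, rfl⟩
  · exact (ht i).2 (by rintro _ ⟨n, rfl⟩; exact hb ⟨n, rfl⟩ i)

end CountablySupported

section SumRetraction

variable {A : Type u} {K : A → Type u} {Γ : A → Type u} (r : ∀ α, Γ α → K α → K α)

def summandRetraction (α : A) : WithBot (Γ α) → K α → OnePoint (Σ α, K α) :=
  WithBot.recBotCoe (fun _ => ∞) fun s x => ↑(⟨α, r α s x⟩ : Σ α, K α)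

def sumRetraction (f : CountablySupported fun α => WithBot (Γ α)) (z : OnePoint (Σ α, K α)) :
    OnePoint (Σ α, K α) :=
  z.elim ∞ fun p => summandRetraction r p.1 (f p.1) p.2

variable {r}

@[simp] theorem summandRetraction_bot (α : A) (x : K α) : summandRetraction r α ⊥ x = ∞ := rfl

@[simp] theorem summandRetraction_coe (α : A) (s : Γ α) (x : K α) :
    summandRetraction r α s x = ↑(⟨α, r α s x⟩ : Σ α, K α) := rfl

@[simp] theorem sumRetraction_infty (f : CountablySupported fun α => WithBot (Γ α)) :
    sumRetraction r f ∞ = ∞ := rfl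

@[simp] theorem sumRetraction_coe (f : CountablySupported fun α => WithBot (Γ α))
    (p : Σ α, K α) : sumRetraction r f p = summandRetraction r p.1 (f p.1) p.2 := rfl

theorem sumRetraction_comp_of_le [∀ α, PartialOrder (Γ α)]
    (hr : ∀ α (s t : Γ α), s ≤ t → r α t ∘ r α s = r α s ∧ r α s ∘ r α t = r α s)
    {f g : CountablySupported fun α => WithBot (Γ α)} (hfg : f ≤ g) :
    sumRetraction r g ∘ sumRetraction r f = sumRetraction r f ∧
      sumRetraction r f ∘ sumRetraction r g = sumRetraction r f := by
  constructor <;> funext z <;> induction z using OnePoint.rec with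
  | infty => rfl
  | coe p => ?_
  all_goals
    obtain ⟨α, x⟩ := p
    have hle : f α ≤ g α := hfg α
    simp only [Function.comp_apply, sumRetraction_coe]
  · cases ha : f α using WithBot.recBotCoe with
    | bot => rfl
    | coe s =>
      obtain ⟨t, hgt, hst⟩ := WithBot.coe_le_iff.1 (ha ▸ hle)
      simpa [hgt] using congrFun (hr α s t hst).1 x
  · cases hb : g α using WithBot.recBotCoe with
    | bot => simp [le_bot_iff.1 (hb ▸ hle)]
    | coe t =>
      cases ha : f α using WithBot.recBotCoe with
      | bot => simp [ha]
      | coe s =>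
        have hst : s ≤ t := WithBot.coe_le_coe.1 (ha ▸ hb ▸ hle)
        simpa [ha] using congrFun (hr α s t hst).2 x

variable [∀ α, TopologicalSpace (K α)]

theorem continuous_summandRetraction (hr : ∀ α s, Continuous (r α s)) (α : A) (a : WithBot (Γ α)) :
    Continuous (summandRetraction r α a) := by
  induction a using WithBot.recBotCoe with
  | bot => exact continuous_const
  | coe s => exact continuous_coe.comp (continuous_sigmaMk.comp (hr α s))

theorem continuous_sumRetraction [∀ α, CompactSpace (K α)] (hr : ∀ α s, Continuous (r α s))
    (f : CountablySupported fun α => WithBot (Γ α)) : Continuous (sumRetraction r f) := by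
  refine (OnePoint.continuous_iff _).2
    ⟨tendsto_coclosedCompact_nhds_infty_of_preserves_summands fun ⟨α, x⟩ => ?_,
      continuous_sigma fun α => continuous_summandRetraction hr α (f α)⟩
  show summandRetraction r α (f α) x = ∞ ∨ ∃ y, summandRetraction r α (f α) x = ↑(⟨α, y⟩ : Σ α, K α)
  induction f α using WithBot.recBotCoe with
  | bot => exact Or.inl rfl
  | coe s => exact Or.inr ⟨r α s x, rfl⟩

theorem metrizableSpace_range_sumRetraction [∀ α, CompactSpace (K α)] [∀ α, T2Space (K α)]
    (hc : ∀ α s, IsCompact (range (r α s))) (hm : ∀ α s, MetrizableSpace (range (r α s)))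
    (f : CountablySupported fun α => WithBot (Γ α)) :
    MetrizableSpace (range (sumRetraction r f)) := by
  let M (α : A) : Set (K α) := ⋃ (s : Γ α) (_ : f α = s), range (r α s)
  have hM {α : A} {s : Γ α} (hs : f α = s) : M α = range (r α s) := by simp [M, hs]
  refine OnePoint.metrizableSpace_of_subset_sigma f.2 (M := M)
    (fun α hα => ?_) (fun α hα => ?_) ?_
  · obtain ⟨s, hs⟩ := WithBot.ne_bot_iff_exists.1 hα
    exact hM hs.symm ▸ hc α s
  · obtain ⟨s, hs⟩ := WithBot.ne_bot_iff_exists.1 hα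
    exact hM hs.symm ▸ hm α s
  · rintro _ ⟨z, rfl⟩
    induction z using OnePoint.rec with
    | infty => exact mem_insert _ _
    | coe p =>
      obtain ⟨α, x⟩ := p
      cases hs : f α using WithBot.recBotCoe with
      | bot => simp [hs]
      | coe s =>
        refine mem_insert_of_mem _ ⟨⟨α, r α s x⟩, ⟨?_, ?_⟩, by simp [hs]⟩
        · simp [hs]
        · exact (hM hs).symm ▸ mem_range_self x

variable [∀ α, PartialOrder (Γ α)]

theorem exists_isLUB_tendsto_sumRetraction
    (hr : ∀ α (v : ℕ → Γ α), Monotone v →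
      ∃ t, IsLUB (range v) t ∧ ∀ x, Tendsto (fun n => r α (v n) x) atTop (𝓝 (r α t x)))
    {u : ℕ → CountablySupported fun α => WithBot (Γ α)} (hu : Monotone u) :
    ∃ t, IsLUB (range u) t ∧
      ∀ z, Tendsto (fun n => sumRetraction r (u n) z) atTop (𝓝 (sumRetraction r t z)) := by
  have hsummand (α : A) (w : ℕ → Γ α) (hw : Monotone w) : ∃ t, IsLUB (range w) t ∧
      Tendsto (fun n => summandRetraction r α (w n)) atTop (𝓝 (summandRetraction r α t)) := by
    obtain ⟨t, ht, hlim⟩ := hr α w hw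
    exact ⟨t, ht, tendsto_pi_nhds.2 fun x =>
      ((continuous_coe.comp continuous_sigmaMk).tendsto _).comp (hlim x)⟩
  obtain ⟨t, hlub, hlim⟩ := CountablySupported.exists_isLUB_forall
    (fun α _ hv => WithBot.exists_isLUB_tendsto (hsummand α) hv) hu
  refine ⟨t, hlub, fun z => ?_⟩
  induction z using OnePoint.rec with
  | infty => exact tendsto_const_nhds
  | coe p => exact tendsto_pi_nhds.1 (hlim p.1) p.2

theorem tendsto_sumRetraction_atTop [∀ α, Nonempty (Γ α)] [∀ α, IsDirectedOrder (Γ α)]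
    (hr : ∀ α x, Tendsto (fun s => r α s x) atTop (𝓝 x)) (z : OnePoint (Σ α, K α)) :
    Tendsto (fun f : CountablySupported fun α => WithBot (Γ α) => sumRetraction r f z) atTop
      (𝓝 z) := by
  induction z using OnePoint.rec with
  | infty => exact tendsto_const_nhds
  | coe p =>
    obtain ⟨α, x⟩ := p
    have hα : Tendsto (fun a => summandRetraction r α a x) atTop (𝓝 ↑(⟨α, x⟩ : Σ α, K α)) :=
      WithBot.tendsto_atTop_of_tendsto_coe
        (((continuous_coe.comp continuous_sigmaMk).tendsto _).comp (hr α x))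
    exact hα.comp (CountablySupported.tendsto_apply_atTop α)

theorem IsRetractionalSkeleton.sumRetraction [∀ α, CompactSpace (K α)] [∀ α, T2Space (K α)]
    (hr : ∀ α, IsRetractionalSkeleton (r α)) : IsRetractionalSkeleton (sumRetraction r) := by
  have (α : A) : Nonempty (Γ α) := (hr α).nonempty
  have (α : A) : IsDirectedOrder (Γ α) := ⟨(hr α).directed⟩
  have hcont := continuous_sumRetraction fun α => (hr α).continuous
  have hcomp {f g : CountablySupported fun α => WithBot (Γ α)} (hfg : f ≤ g) :=
    sumRetraction_comp_of_le (fun α => (hr α).comp_eq_of_le) hfg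
  exact
  { nonempty := ⟨⊥⟩
    directed := exists_ge_ge
    continuous := hcont
    retraction := fun _ => (hcomp le_rfl).1
    compact_range := fun f => isCompact_range (hcont f)
    metrizable_range := metrizableSpace_range_sumRetraction (fun α => (hr α).compact_range)
      fun α => (hr α).metrizable_range
    comp_eq_of_le := fun _ _ => hcomp
    seq_sup := fun _ => exists_isLUB_tendsto_sumRetraction fun α => (hr α).seq_sup
    tendsto_id := tendsto_sumRetraction_atTop fun α => (hr α).tendsto_id }

end SumRetraction

/-- The one-point compactification of a topological sum of compact spaces,
each admitting a retractional skeleton, admits a retractional skeleton. -/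
theorem onePoint_sum_of_ncValdivia
    {A : Type u} {K : A → Type u} [∀ α, TopologicalSpace (K α)]
    [∀ α, CompactSpace (K α)] [∀ α, T2Space (K α)]
    (h : ∀ α, HasRetractionalSkeleton (K α)) :
    HasRetractionalSkeleton (OnePoint (Σ α, K α)) := by
  choose Γ _ r hr using h
  exact ⟨_, _, _, IsRetractionalSkeleton.sumRetraction hr⟩
end
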